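/- Let M be a 1×q pattern vector and N an r×q pattern matrix, let T = col(M, N), and let S(T) be the derived set of the graph G(T) under the color change rule. Then M is independent of N if and only if node 1 (the node corresponding to the row M) belongs to S(T). -/

import Mathlib

/-!
If `z ᵀ T₀ = 0` for a realization `T₀` of `T`, each color change forces one more entry of `z`
to vanish: in the column `i` that performs it, `z j * T₀ j i` is the only possibly nonzero term
and `T₀ j i ≠ 0`. Conversely, in each column the rows left white contain no `*` without a second
nonzero entry beside it, so their entries can be realized with zero sum; the indicator of the
white rows is then a left null vector whose first entry is `1` when node `0` stays white.
-/

inductive PSym | zero | star | any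
deriving DecidableEq

namespace PSym

def symAdd : PSym → PSym → PSym
  | zero, x => x
  | x, zero => x
  | _, _ => any

def symMul : PSym → PSym → PSym
  | zero, _ => zero
  | _, zero => zero
  | star, star => star
  | _, _ => any

instance : Zero PSym := ⟨zero⟩
instance : Add PSym := ⟨symAdd⟩

instance : AddCommMonoid PSym where
  add_assoc a b c := by cases a <;> cases b <;> cases c <;> rfl
  zero_add a := by cases a <;> rfl
  add_zero a := by cases a <;> rfl
  add_comm a b := by cases a <;> cases b <;> rfl
  nsmul := nsmulRec

end PSym

/-- The pattern class of a pattern matrix. -/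
def PatClass {p q : Type*} (M : Matrix p q PSym) : Set (Matrix p q ℝ) :=
  {A | ∀ i j, (M i j = PSym.zero → A i j = 0) ∧ (M i j = PSym.star → A i j ≠ 0)}

/-- Product of pattern matrices. -/
def patMul {p q s : ℕ} (M : Matrix (Fin p) (Fin q) PSym) (N : Matrix (Fin q) (Fin s) PSym) :
    Matrix (Fin p) (Fin s) PSym :=
  fun i j => ∑ k, PSym.symMul (M i k) (N k j)

/-- A 1×q pattern vector `M` is independent of an r×q pattern matrix `N`. -/
def Independent {q r : ℕ} (M : Matrix (Fin 1) (Fin q) PSym) (N : Matrix (Fin r) (Fin q) PSym) : Prop :=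
  ∀ M₀ ∈ PatClass M, ∀ N₀ ∈ PatClass N, ∀ (z₁ : ℝ) (z₂ : Fin r → ℝ),
    (∀ j, z₁ * M₀ 0 j + ∑ i, z₂ i * N₀ i j = 0) → z₁ = 0

/-- The derived set of the color change rule on the graph `G(T)` of a pattern
matrix `T`: a (row) node `j` is black if some (column) node `i` has `j` as its
unique white out-neighbor via a `*`-edge, all other out-neighbors of `i`
(nodes `j'` with `T j' i ≠ 0`) being already black. -/
inductive DerivedBlack {r q : ℕ} (T : Matrix (Fin r) (Fin q) PSym) : Fin r → Prop
  | step (i : Fin q) (j : Fin r) (hstar : T j i = PSym.star)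
      (hrest : ∀ j' : Fin r, T j' i ≠ PSym.zero → j' ≠ j → DerivedBlack T j') :
      DerivedBlack T j

open Finset Matrix

lemma exists_sum_eq_zero_of_star_not_alone {ι : Type*} [DecidableEq ι] (c : ι → PSym)
    (W : Finset ι) (hW : ∀ j ∈ W, c j = .star → ∃ j' ∈ W, j' ≠ j ∧ c j' ≠ .zero) :
    ∃ v : ι → ℝ, (∀ j, (c j = .zero → v j = 0) ∧ (c j = .star → v j ≠ 0)) ∧
      ∑ j ∈ W, v j = 0 := by
  by_cases hstar : ∃ j₀ ∈ W, c j₀ = .star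
  · obtain ⟨j₀, hj₀, hs₀⟩ := hstar
    obtain ⟨j₁, hj₁, hne, hnz⟩ := hW j₀ hj₀ hs₀
    -- `j₁` balances the other stars of `W`, among them `j₀`.
    set k := #((W.filter (c · = .star)).erase j₁)
    have hk : 0 < k := card_pos.2 ⟨j₀, mem_erase.2 ⟨hne.symm, mem_filter.2 ⟨hj₀, hs₀⟩⟩⟩
    refine ⟨fun j => if j = j₁ then -(k : ℝ) else if c j = .star then 1 else 0,
      fun j => ?_, ?_⟩
    · by_cases hj : j = j₁
      · subst hj
        simp only [↓reduceIte]
        exact ⟨fun h => absurd h hnz, fun _ => neg_ne_zero.2 (Nat.cast_ne_zero.2 hk.ne')⟩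
      · simp +contextual [hj]
    · rw [← add_sum_erase W _ hj₁, if_pos rfl,
        sum_congr rfl fun j hj => if_neg (ne_of_mem_erase hj), sum_boole, filter_erase]
      ring
  · push Not at hstar
    refine ⟨fun j => if c j = .star then 1 else 0, fun j => by simp +contextual, ?_⟩
    exact sum_eq_zero fun j hj => if_neg (hstar j hj)

lemma exists_mem_patClass_sum_rows_eq_zero {m n : Type*} [DecidableEq m] (T : Matrix m n PSym)
    (W : Finset m)
    (hW : ∀ j ∈ W, ∀ i, T j i = .star → ∃ j' ∈ W, j' ≠ j ∧ T j' i ≠ .zero) :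
    ∃ T₀ ∈ PatClass T, ∀ i, ∑ j ∈ W, T₀ j i = 0 := by
  choose v hv hsum using fun i =>
    exists_sum_eq_zero_of_star_not_alone (fun j => T j i) W fun j hj => hW j hj i
  exact ⟨fun j i => v i j, fun j i => hv i j, hsum⟩

section DerivedBlack

variable {r q : ℕ} {T : Matrix (Fin r) (Fin q) PSym}

theorem DerivedBlack.eq_zero_of_vecMul_eq_zero {T₀ : Matrix (Fin r) (Fin q) ℝ}
    (hT₀ : T₀ ∈ PatClass T) {z : Fin r → ℝ} (hz : z ᵥ* T₀ = 0) {j : Fin r}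
    (hj : DerivedBlack T j) : z j = 0 := by
  induction hj with
  | step i j hstar _ ih =>
    have hcol : (z ᵥ* T₀) i = z j * T₀ j i := by
      refine sum_eq_single j (fun k _ hk => ?_) (fun h => absurd (mem_univ j) h)
      by_cases hk0 : T k i = .zero
      · show z k * T₀ k i = 0
        rw [(hT₀ k i).1 hk0, mul_zero]
      · rw [ih k hk0 hk, zero_mul]
    rw [hz, Pi.zero_apply, eq_comm, mul_eq_zero] at hcol
    exact hcol.resolve_right ((hT₀ j i).2 hstar)

lemma star_not_alone_of_not_derivedBlack {j : Fin r} (hj : ¬DerivedBlack T j) (i : Fin q)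
    (hstar : T j i = .star) : ∃ j', ¬DerivedBlack T j' ∧ j' ≠ j ∧ T j' i ≠ .zero := by
  by_contra! h
  exact hj (.step i j hstar fun j' hnz hne => by_contra fun hb => hnz (h j' hb hne))

end DerivedBlack

lemma independent_iff_forall_vecMul_eq_zero {q r : ℕ}
    (M : Matrix (Fin 1) (Fin q) PSym) (N : Matrix (Fin r) (Fin q) PSym) :
    Independent M N ↔
      ∀ T₀ ∈ PatClass (Matrix.of (Fin.cons (M 0) N) : Matrix (Fin (r + 1)) (Fin q) PSym),
      ∀ z : Fin (r + 1) → ℝ, z ᵥ* T₀ = 0 → z 0 = 0 := by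
  constructor
  · intro h T₀ hT₀ z hz
    refine h (fun _ => T₀ 0) (fun j i => ?_) (fun k => T₀ k.succ) (fun k i => hT₀ k.succ i)
      (z 0) (Fin.tail z) fun i => ?_
    · rw [Subsingleton.elim j 0]; exact hT₀ 0 i
    · simpa [vecMul, dotProduct, Fin.sum_univ_succ, Fin.tail] using congrFun hz i
  · intro h M₀ hM₀ N₀ hN₀ z₁ z₂ hz
    refine h (Matrix.of (Fin.cons (M₀ 0) N₀)) (fun j i => ?_) (Fin.cons z₁ z₂)
      (funext fun i => ?_)
    · cases j using Fin.cases with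
      | zero => exact hM₀ 0 i
      | succ k => exact hN₀ k i
    · rw [Pi.zero_apply, vecMul, dotProduct, Fin.sum_univ_succ]
      exact hz i

/-- `M` is independent of `N` if and only if the node of the row
of `M` (node `0` of `G(T)` for `T = col(M, N)`) belongs to the derived set. -/
theorem independent_iff_derived {q r : ℕ}
    (M : Matrix (Fin 1) (Fin q) PSym) (N : Matrix (Fin r) (Fin q) PSym) :
    Independent M N ↔
      DerivedBlack (Matrix.of (Fin.cons (M 0) N) : Matrix (Fin (r + 1)) (Fin q) PSym)
        (0 : Fin (r + 1)) := by
  classical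
  set T : Matrix (Fin (r + 1)) (Fin q) PSym := Matrix.of (Fin.cons (M 0) N)
  rw [independent_iff_forall_vecMul_eq_zero]
  refine ⟨fun h => ?_, fun h0 T₀ hT₀ z hz => h0.eq_zero_of_vecMul_eq_zero hT₀ hz⟩
  by_contra h0
  set W := univ.filter fun j => ¬DerivedBlack T j
  obtain ⟨T₀, hT₀, hsum⟩ := exists_mem_patClass_sum_rows_eq_zero T W fun j hj i hstar => by
    simpa [W] using star_not_alone_of_not_derivedBlack (mem_filter.1 hj).2 i hstar
  have := h T₀ hT₀ (fun j => if j ∈ W then 1 else 0) <| funext fun i => by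
    simpa [vecMul, dotProduct, sum_ite_mem] using hsum i
  simp [W, h0] at this
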